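/- For nontrivial bounded lattices A and B, the set Con₀₁(A ⊞ B) of congruences of A ⊞ B with singleton classes at 0 and 1 is in lattice isomorphism with Con₀₁(A) × Con₀₁(B), via (α, β) ↦ α ⊞ β. -/

import Mathlib

/-- A filter of a lattice: a nonempty, upward-closed subset closed under binary meets. -/
def IsLatFilter {L : Type*} [Lattice L] (F : Set L) : Prop :=
  F.Nonempty ∧ (∀ x ∈ F, ∀ y : L, x ≤ y → y ∈ F) ∧ (∀ x ∈ F, ∀ y ∈ F, x ⊓ y ∈ F)

/-- An ideal of a lattice: a nonempty, downward-closed subset closed under binary joins. -/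
def IsLatIdeal {L : Type*} [Lattice L] (I : Set L) : Prop :=
  I.Nonempty ∧ (∀ x ∈ I, ∀ y : L, y ≤ x → y ∈ I) ∧ (∀ x ∈ I, ∀ y ∈ I, x ⊔ y ∈ I)

/-- A prime filter: a proper filter such that `x ⊔ y ∈ P` implies `x ∈ P` or `y ∈ P`. -/
def IsPrimeFilter {L : Type*} [Lattice L] (P : Set L) : Prop :=
  IsLatFilter P ∧ P ≠ Set.univ ∧ ∀ x y : L, x ⊔ y ∈ P → x ∈ P ∨ y ∈ P

/-- A prime ideal: a proper ideal such that `x ⊓ y ∈ I` implies `x ∈ I` or `y ∈ I`. -/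
def IsPrimeIdeal {L : Type*} [Lattice L] (I : Set L) : Prop :=
  IsLatIdeal I ∧ I ≠ Set.univ ∧ ∀ x y : L, x ⊓ y ∈ I → x ∈ I ∨ y ∈ I

/-- A lattice congruence: an equivalence relation compatible with `⊔` and `⊓`. -/
def IsLatCong {L : Type*} [Lattice L] (θ : L → L → Prop) : Prop :=
  Equivalence θ ∧ ∀ a b c d : L, θ a b → θ c d → θ (a ⊔ c) (b ⊔ d) ∧ θ (a ⊓ c) (b ⊓ d)

/-- `C` is the horizontal sum of its subsets `A` and `B`: both are bounded sublattices,
they cover `C`, they intersect exactly in `{⊥, ⊤}`, and elements of `A \ {⊥, ⊤}` are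
incomparable with elements of `B \ {⊥, ⊤}`. -/
structure IsHorizSum {C : Type*} [Lattice C] [BoundedOrder C] (A B : Set C) : Prop where
  botA : ⊥ ∈ A
  topA : ⊤ ∈ A
  botB : ⊥ ∈ B
  topB : ⊤ ∈ B
  subA : ∀ x ∈ A, ∀ y ∈ A, x ⊓ y ∈ A ∧ x ⊔ y ∈ A
  subB : ∀ x ∈ B, ∀ y ∈ B, x ⊓ y ∈ B ∧ x ⊔ y ∈ B
  union : A ∪ B = Set.univ
  inter : A ∩ B = {⊥, ⊤}
  incomp : ∀ a ∈ A, a ≠ ⊥ → a ≠ ⊤ → ∀ b ∈ B, b ≠ ⊥ → b ≠ ⊤ → ¬ a ≤ b ∧ ¬ b ≤ a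

/-- A congruence of the sublattice `A` of `C` (represented as a relation on `C` supported
on `A`) whose classes of `⊥` and `⊤` are singletons. -/
def IsCon01On {C : Type*} [Lattice C] [BoundedOrder C] (A : Set C)
    (θ : C → C → Prop) : Prop :=
  (∀ x y : C, θ x y → x ∈ A ∧ y ∈ A) ∧
  (∀ x ∈ A, θ x x) ∧ (∀ x y : C, θ x y → θ y x) ∧
  (∀ x y z : C, θ x y → θ y z → θ x z) ∧
  (∀ a b c d : C, θ a b → θ c d → θ (a ⊔ c) (b ⊔ d) ∧ θ (a ⊓ c) (b ⊓ d)) ∧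
  (∀ x : C, θ x ⊥ → x = ⊥) ∧ (∀ x : C, θ x ⊤ → x = ⊤)

/-- A congruence of `C` whose classes of `⊥` and `⊤` are singletons. -/
def IsCon01 {C : Type*} [Lattice C] [BoundedOrder C] (θ : C → C → Prop) : Prop :=
  IsLatCong θ ∧ (∀ x : C, θ x ⊥ → x = ⊥) ∧ (∀ x : C, θ x ⊤ → x = ⊤)
/-!
Every pair of related elements of `A ⊞ B` lies in `A` or in `B`: if `a ∈ A` and `b ∈ B` are
both different from `⊥` and `⊤`, then `a ⊔ b = ⊤`, so a congruence relating them would also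
relate `b = b ⊔ b` to `⊤`. Conversely, `α ⊞ β` is transitive because `A` and `B` only meet in the
singleton classes `{⊥}` and `{⊤}`, and compatible because joins and meets of elements from the
two sides are either computed on one side or are `⊤` and `⊥`. Hence restricting to `A` and to `B`
inverts `(α, β) ↦ α ⊞ β`, and both maps are monotone.
-/

namespace IsHorizSum

variable {C : Type*} [Lattice C] [BoundedOrder C] {A B : Set C}

theorem symm (h : IsHorizSum A B) : IsHorizSum B A where
  botA := h.botB
  topA := h.topB
  botB := h.botA
  topB := h.topA
  subA := h.subB
  subB := h.subA
  union := Set.union_comm A B ▸ h.union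
  inter := Set.inter_comm A B ▸ h.inter
  incomp b hb hb0 hb1 a ha ha0 ha1 := (h.incomp a ha ha0 ha1 b hb hb0 hb1).symm

theorem mem_or_mem (h : IsHorizSum A B) (x : C) : x ∈ A ∨ x ∈ B :=
  (Set.ext_iff.mp h.union x).mpr trivial

theorem mem_pair_of_mem_of_mem (h : IsHorizSum A B) {x : C} (hA : x ∈ A) (hB : x ∈ B) :
    x ∈ ({⊥, ⊤} : Set C) :=
  h.inter ▸ ⟨hA, hB⟩

theorem mem_left_of_mem_pair (h : IsHorizSum A B) {x : C} (hx : x ∈ ({⊥, ⊤} : Set C)) :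
    x ∈ A := by
  rcases hx with rfl | rfl
  exacts [h.botA, h.topA]

theorem sup_eq_top (h : IsHorizSum A B) {a b : C} (ha : a ∈ A) (ha0 : a ≠ ⊥) (ha1 : a ≠ ⊤)
    (hb : b ∈ B) (hb0 : b ≠ ⊥) (hb1 : b ≠ ⊤) : a ⊔ b = ⊤ := by
  by_contra hne
  have hne0 : a ⊔ b ≠ ⊥ := fun h0 => ha0 (le_bot_iff.mp (h0 ▸ le_sup_left))
  rcases h.mem_or_mem (a ⊔ b) with hA | hB
  · exact (h.incomp _ hA hne0 hne b hb hb0 hb1).2 le_sup_right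
  · exact (h.incomp a ha ha0 ha1 _ hB hne0 hne).1 le_sup_left

theorem inf_eq_bot (h : IsHorizSum A B) {a b : C} (ha : a ∈ A) (ha0 : a ≠ ⊥) (ha1 : a ≠ ⊤)
    (hb : b ∈ B) (hb0 : b ≠ ⊥) (hb1 : b ≠ ⊤) : a ⊓ b = ⊥ := by
  by_contra hne
  have hne1 : a ⊓ b ≠ ⊤ := fun h1 => ha1 (top_le_iff.mp (h1 ▸ inf_le_left))
  rcases h.mem_or_mem (a ⊓ b) with hA | hB
  · exact (h.incomp _ hA hne hne1 b hb hb0 hb1).1 inf_le_right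
  · exact (h.incomp a ha ha0 ha1 _ hB hne hne1).2 inf_le_left

end IsHorizSum

namespace IsCon01On

variable {C : Type*} [Lattice C] [BoundedOrder C] {S : Set C} {θ : C → C → Prop}

theorem mem_left (h : IsCon01On S θ) {x y : C} (hxy : θ x y) : x ∈ S := (h.1 x y hxy).1

theorem mem_right (h : IsCon01On S θ) {x y : C} (hxy : θ x y) : y ∈ S := (h.1 x y hxy).2

theorem refl (h : IsCon01On S θ) {x : C} (hx : x ∈ S) : θ x x := h.2.1 x hx

theorem symm (h : IsCon01On S θ) {x y : C} (hxy : θ x y) : θ y x := h.2.2.1 x y hxy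

theorem trans (h : IsCon01On S θ) {x y z : C} (hxy : θ x y) (hyz : θ y z) : θ x z :=
  h.2.2.2.1 x y z hxy hyz

theorem sup (h : IsCon01On S θ) {a b c d : C} (hab : θ a b) (hcd : θ c d) :
    θ (a ⊔ c) (b ⊔ d) :=
  (h.2.2.2.2.1 a b c d hab hcd).1

theorem inf (h : IsCon01On S θ) {a b c d : C} (hab : θ a b) (hcd : θ c d) :
    θ (a ⊓ c) (b ⊓ d) :=
  (h.2.2.2.2.1 a b c d hab hcd).2

theorem eq_bot (h : IsCon01On S θ) {x : C} (hx : θ x ⊥) : x = ⊥ := h.2.2.2.2.2.1 x hx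

theorem eq_top (h : IsCon01On S θ) {x : C} (hx : θ x ⊤) : x = ⊤ := h.2.2.2.2.2.2 x hx

theorem eq_of_rel_of_mem_pair (h : IsCon01On S θ) {x y : C} (hxy : θ x y)
    (hx : x ∈ ({⊥, ⊤} : Set C)) : x = y := by
  rcases hx with rfl | rfl
  exacts [(h.eq_bot (h.symm hxy)).symm, (h.eq_top (h.symm hxy)).symm]

end IsCon01On

section HorizSum

variable {C : Type*} [Lattice C] [BoundedOrder C] {A B : Set C} {α β : C → C → Prop}

theorem IsCon01On.horizSum_sup_inf (hAB : IsHorizSum A B) (hα : IsCon01On A α)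
    (hβ : IsCon01On B β) {a b c d : C} (hab : α a b) (hcd : β c d) :
    (α (a ⊔ c) (b ⊔ d) ∨ β (a ⊔ c) (b ⊔ d)) ∧
      (α (a ⊓ c) (b ⊓ d) ∨ β (a ⊓ c) (b ⊓ d)) := by
  by_cases ha : a ∈ ({⊥, ⊤} : Set C)
  · obtain rfl := hα.eq_of_rel_of_mem_pair hab ha
    have haa : β a a := hβ.refl (hAB.symm.mem_left_of_mem_pair ha)
    exact ⟨Or.inr (hβ.sup haa hcd), Or.inr (hβ.inf haa hcd)⟩
  by_cases hc : c ∈ ({⊥, ⊤} : Set C)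
  · obtain rfl := hβ.eq_of_rel_of_mem_pair hcd hc
    have hcc : α c c := hα.refl (hAB.mem_left_of_mem_pair hc)
    exact ⟨Or.inl (hα.sup hab hcc), Or.inl (hα.inf hab hcc)⟩
  have hb : b ∉ ({⊥, ⊤} : Set C) := fun hb =>
    ha (hα.eq_of_rel_of_mem_pair (hα.symm hab) hb ▸ hb)
  have hd : d ∉ ({⊥, ⊤} : Set C) := fun hd =>
    hc (hβ.eq_of_rel_of_mem_pair (hβ.symm hcd) hd ▸ hd)
  simp only [Set.mem_insert_iff, Set.mem_singleton_iff, not_or] at ha hb hc hd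
  have haA := hα.mem_left hab
  have hbA := hα.mem_right hab
  have hcB := hβ.mem_left hcd
  have hdB := hβ.mem_right hcd
  rw [hAB.sup_eq_top haA ha.1 ha.2 hcB hc.1 hc.2, hAB.sup_eq_top hbA hb.1 hb.2 hdB hd.1 hd.2,
    hAB.inf_eq_bot haA ha.1 ha.2 hcB hc.1 hc.2, hAB.inf_eq_bot hbA hb.1 hb.2 hdB hd.1 hd.2]
  exact ⟨Or.inl (hα.refl hAB.topA), Or.inl (hα.refl hAB.botA)⟩

theorem IsCon01On.isCon01_horizSum (hAB : IsHorizSum A B) (hα : IsCon01On A α)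
    (hβ : IsCon01On B β) : IsCon01 (fun x y => α x y ∨ β x y) := by
  refine ⟨⟨⟨fun x => ?_, ?_, ?_⟩, ?_⟩, ?_, ?_⟩
  · exact (hAB.mem_or_mem x).imp hα.refl hβ.refl
  · rintro x y (h | h)
    exacts [Or.inl (hα.symm h), Or.inr (hβ.symm h)]
  · rintro x y z (h | h) (h' | h')
    · exact Or.inl (hα.trans h h')
    · obtain rfl := hα.eq_of_rel_of_mem_pair (hα.symm h)
        (hAB.mem_pair_of_mem_of_mem (hα.mem_right h) (hβ.mem_left h'))
      exact Or.inr h'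
    · obtain rfl := hα.eq_of_rel_of_mem_pair h'
        (hAB.mem_pair_of_mem_of_mem (hα.mem_left h') (hβ.mem_right h))
      exact Or.inr h
    · exact Or.inr (hβ.trans h h')
  · rintro a b c d (h | h) (h' | h')
    · exact ⟨Or.inl (hα.sup h h'), Or.inl (hα.inf h h')⟩
    · exact hα.horizSum_sup_inf hAB hβ h h'
    · obtain ⟨hsup, hinf⟩ := hβ.horizSum_sup_inf hAB.symm hα h h'
      exact ⟨hsup.symm, hinf.symm⟩
    · exact ⟨Or.inr (hβ.sup h h'), Or.inr (hβ.inf h h')⟩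
  · rintro x (h | h)
    exacts [hα.eq_bot h, hβ.eq_bot h]
  · rintro x (h | h)
    exacts [hα.eq_top h, hβ.eq_top h]

theorem IsCon01On.horizSum_restrict_iff (hAB : IsHorizSum A B) (hα : IsCon01On A α)
    (hβ : IsCon01On B β) {x y : C} :
    ((α x y ∨ β x y) ∧ x ∈ A ∧ y ∈ A) ↔ α x y := by
  refine ⟨fun ⟨h, hx, _⟩ => h.elim id fun h => ?_, fun h => ⟨Or.inl h, hα.1 x y h⟩⟩
  obtain rfl := hβ.eq_of_rel_of_mem_pair h
    (hAB.mem_pair_of_mem_of_mem hx (hβ.mem_left h))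
  exact hα.refl hx

end HorizSum

namespace IsCon01

variable {C : Type*} [Lattice C] [BoundedOrder C] {A B : Set C} {θ : C → C → Prop}

theorem restrict (hA : ∀ x ∈ A, ∀ y ∈ A, x ⊓ y ∈ A ∧ x ⊔ y ∈ A)
    (hθ : IsCon01 θ) : IsCon01On A (fun x y => θ x y ∧ x ∈ A ∧ y ∈ A) := by
  obtain ⟨⟨heq, hcomp⟩, hbot, htop⟩ := hθ
  refine ⟨fun x y h => h.2, fun x hx => ⟨heq.refl x, hx, hx⟩,
    fun x y h => ⟨heq.symm h.1, h.2.2, h.2.1⟩,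
    fun x y z h h' => ⟨heq.trans h.1 h'.1, h.2.1, h'.2.2⟩,
    fun a b c d h h' => ?_, fun x h => hbot x h.1, fun x h => htop x h.1⟩
  obtain ⟨hsup, hinf⟩ := hcomp a b c d h.1 h'.1
  exact ⟨⟨hsup, (hA a h.2.1 c h'.2.1).2, (hA b h.2.2 d h'.2.2).2⟩,
    ⟨hinf, (hA a h.2.1 c h'.2.1).1, (hA b h.2.2 d h'.2.2).1⟩⟩

theorem mem_left_of_mem_right (hAB : IsHorizSum A B) (hθ : IsCon01 θ) {x y : C}
    (hxy : θ x y) (hx : x ∈ A) (hy : y ∈ B) : y ∈ A := by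
  obtain ⟨⟨heq, hcomp⟩, hbot, htop⟩ := hθ
  by_cases hx0 : x = ⊥
  · subst hx0; exact hbot y (heq.symm hxy) ▸ hAB.botA
  by_cases hx1 : x = ⊤
  · subst hx1; exact htop y (heq.symm hxy) ▸ hAB.topA
  by_cases hy0 : y = ⊥
  · exact absurd (hbot x (hy0 ▸ hxy)) hx0
  by_cases hy1 : y = ⊤
  · exact absurd (htop x (hy1 ▸ hxy)) hx1
  have hyy : θ (x ⊔ y) (y ⊔ y) := (hcomp x y y y hxy (heq.refl y)).1
  rw [hAB.sup_eq_top hx hx0 hx1 hy hy0 hy1, sup_idem] at hyy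
  exact absurd (htop y (heq.symm hyy)) hy1

theorem mem_and_mem_or_mem_and_mem (hAB : IsHorizSum A B) (hθ : IsCon01 θ) {x y : C}
    (hxy : θ x y) : (x ∈ A ∧ y ∈ A) ∨ (x ∈ B ∧ y ∈ B) := by
  rcases hAB.mem_or_mem x with hx | hx <;> rcases hAB.mem_or_mem y with hy | hy
  · exact Or.inl ⟨hx, hy⟩
  · exact Or.inl ⟨hx, hθ.mem_left_of_mem_right hAB hxy hx hy⟩
  · exact Or.inr ⟨hx, hθ.mem_left_of_mem_right hAB.symm hxy hx hy⟩
  · exact Or.inr ⟨hx, hy⟩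

end IsCon01

def IsHorizSum.con01Equiv {C : Type*} [Lattice C] [BoundedOrder C] {A B : Set C}
    (hAB : IsHorizSum A B) :
    {p : (C → C → Prop) × (C → C → Prop) // IsCon01On A p.1 ∧ IsCon01On B p.2} ≃
      {θ : C → C → Prop // IsCon01 θ} where
  toFun p := ⟨fun x y => p.1.1 x y ∨ p.1.2 x y, p.2.1.isCon01_horizSum hAB p.2.2⟩
  invFun θ :=
    ⟨(fun x y => θ.1 x y ∧ x ∈ A ∧ y ∈ A, fun x y => θ.1 x y ∧ x ∈ B ∧ y ∈ B),
      θ.2.restrict hAB.subA, θ.2.restrict hAB.subB⟩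
  left_inv := by
    rintro ⟨⟨α, β⟩, hα, hβ⟩
    refine Subtype.ext (Prod.ext ?_ ?_) <;> funext x y <;> apply propext
    · exact hα.horizSum_restrict_iff hAB hβ
    · exact (and_congr_left' or_comm).trans (hβ.horizSum_restrict_iff hAB.symm hα)
  right_inv := by
    rintro ⟨θ, hθ⟩
    refine Subtype.ext (funext₂ fun x y => propext ⟨?_, fun h => ?_⟩)
    · rintro (h | h) <;> exact h.1
    · exact (hθ.mem_and_mem_or_mem_and_mem hAB h).imp (⟨h, ·⟩) (⟨h, ·⟩)

theorem con01_horizSum_orderIso_general {C : Type*} [Lattice C] [BoundedOrder C] (A B : Set C)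
    (hAB : IsHorizSum A B) :
    ∃ e : {p : (C → C → Prop) × (C → C → Prop) //
            IsCon01On A p.1 ∧ IsCon01On B p.2} ≃o {θ : C → C → Prop // IsCon01 θ},
      ∀ p, (e p : C → C → Prop) = fun x y => p.1.1 x y ∨ p.1.2 x y := by
  have horizSum_mono : Monotone hAB.con01Equiv := fun p q hpq x y =>
    Or.imp (hpq.1 x y) (hpq.2 x y)
  have restrict_mono : Monotone hAB.con01Equiv.symm := fun θ θ' h =>
    ⟨fun x y => And.imp_left (h x y), fun x y => And.imp_left (h x y)⟩
  exact ⟨hAB.con01Equiv.toOrderIso horizSum_mono restrict_mono, fun _ => rfl⟩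

/-- `Con₀₁(A ⊞ B)` is in lattice isomorphism with `Con₀₁(A) × Con₀₁(B)` via
`(α, β) ↦ α ⊞ β` (whose classes are those of `α`, those of `β`, and the glued singleton
classes of `⊥` and `⊤`). -/
theorem con01_horizSum_orderIso {C : Type*} [Lattice C] [BoundedOrder C] (A B : Set C)
    (hAB : IsHorizSum A B) (hbt : (⊥ : C) ≠ ⊤) :
    ∃ e : {p : (C → C → Prop) × (C → C → Prop) //
            IsCon01On A p.1 ∧ IsCon01On B p.2} ≃o {θ : C → C → Prop // IsCon01 θ},
      ∀ p, (e p : C → C → Prop) = fun x y => p.1.1 x y ∨ p.1.2 x y :=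
  con01_horizSum_orderIso_general A B hAB
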